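/- arXiv:math/0301348 — 2 statements merged into one kernel-verified Lean document; each statement's English description precedes it below -/
import Mathlib

section
/- There exist a group G, a normal subgroup H of G, and a normal subgroup K of H, such that K is co-amenable in G but K is not co-amenable in H. -/
/-- The space ℓ∞(X) of bounded real-valued functions on `X`,
as a submodule of `X → ℝ`. -/
def BddFns (X : Type*) : Submodule ℝ (X → ℝ) where
  carrier := {f | ∃ C : ℝ, ∀ x, |f x| ≤ C}
  add_mem' := by
    rintro f g ⟨C, hC⟩ ⟨D, hD⟩
    exact ⟨C + D, fun x => (abs_add_le _ _).trans (add_le_add (hC x) (hD x))⟩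
  zero_mem' := ⟨0, fun x => by simp⟩
  smul_mem' := by
    rintro c f ⟨C, hC⟩
    exact ⟨|c| * C, fun x => by
      simp only [Pi.smul_apply, smul_eq_mul, abs_mul]
      exact mul_le_mul_of_nonneg_left (hC x) (abs_nonneg c)⟩

/-- Left translation of a function on a `G`-set: `(g · f)(x) = f (g⁻¹ • x)`. -/
def lshift {G X : Type*} [Group G] [MulAction G X] (g : G) (f : X → ℝ) : X → ℝ :=
  fun x => f (g⁻¹ • x)

lemma lshift_mem {G X : Type*} [Group G] [MulAction G X] (g : G) {f : X → ℝ}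
    (hf : f ∈ BddFns X) : lshift g f ∈ BddFns X := by
  obtain ⟨C, hC⟩ := hf
  exact ⟨C, fun x => hC _⟩

/-- A `G`-invariant mean on ℓ∞(X): a linear functional `m` with `m 1 = 1`,
`m f ≥ 0` for `f ≥ 0` pointwise, invariant under the `G`-action. -/
structure InvariantMean (G : Type*) (X : Type*) [Group G] [MulAction G X] where
  toFun : (BddFns X) →ₗ[ℝ] ℝ
  norm_one : toFun ⟨(fun _ => 1), ⟨1, fun _ => by norm_num⟩⟩ = 1
  nonneg : ∀ f : BddFns X, (∀ x, 0 ≤ (f : X → ℝ) x) → 0 ≤ toFun f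
  invariant : ∀ (g : G) (f : BddFns X),
    toFun ⟨lshift g (f : X → ℝ), lshift_mem g f.2⟩ = toFun f

/-- A subgroup `H ≤ G` is co-amenable in `G` if there is a `G`-invariant mean
on ℓ∞(G/H), where `G/H` is the left coset space. -/
def Subgroup.Coamenable {G : Type*} [Group G] (H : Subgroup G) : Prop :=
  Nonempty (InvariantMean G (G ⧸ H))

/-- A group is amenable if there is a left-translation-invariant mean on ℓ∞(G). -/
def AmenableGroup (G : Type*) [Group G] : Prop :=
  Nonempty (InvariantMean G G)

/-!
Take `G = F₂ ≀ ℤ`, `H` its base group `⊕_ℤ F₂` and `K` the elements of `H` supported on the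
positive coordinates. With `t` the generator of `ℤ`, every `g ∈ G` moves the tail of the sequence
of cosets `t⁻ⁿK` by a fixed shift, so an ultralimit of Cesàro averages along this sequence is a
`G`-invariant mean on `G/K`. On the other hand, evaluation at the coordinate `0` is a surjection
`H → F₂` that kills `K`, so an `H`-invariant mean on `H/K` would push forward to an invariant mean
on `F₂`; the decomposition of `F₂` by the first letter of reduced words rules that out.
-/

open Filter Topology
open scoped Pointwise

noncomputable section

namespace BddFns

variable {X Y : Type*}

def comap (θ : X → Y) : BddFns Y →ₗ[ℝ] BddFns X where
  toFun f := ⟨f ∘ θ, f.2.imp fun _ hC x => hC (θ x)⟩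
  map_add' _ _ := rfl
  map_smul' _ _ := rfl

@[simp] lemma coe_comap (θ : X → Y) (f : BddFns Y) : (comap θ f : X → ℝ) = f ∘ θ := rfl

def indicator (S : Set X) : BddFns X :=
  ⟨S.indicator 1, 1, fun x => by by_cases hx : x ∈ S <;> simp [hx]⟩

@[simp] lemma coe_indicator (S : Set X) : (indicator S : X → ℝ) = S.indicator 1 := rfl

end BddFns

namespace InvariantMean

section SetMean

variable {G X : Type*} [Group G] [MulAction G X] (M : InvariantMean G X)

lemma mono {f f' : BddFns X} (h : ∀ x, (f : X → ℝ) x ≤ (f' : X → ℝ) x) :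
    M.toFun f ≤ M.toFun f' := by
  have := M.nonneg (f' - f) fun x => sub_nonneg.2 (h x)
  rwa [map_sub, sub_nonneg] at this

def setMean (S : Set X) : ℝ := M.toFun (BddFns.indicator S)

lemma setMean_univ : M.setMean Set.univ = 1 := by
  rw [setMean, ← M.norm_one]
  congr
  ext
  simp

lemma setMean_smul (g : G) (S : Set X) : M.setMean (g • S) = M.setMean S := by
  classical
  conv_rhs => rw [setMean, ← M.invariant g]
  refine congrArg M.toFun (Subtype.ext (funext fun x => ?_))
  simp only [BddFns.coe_indicator, lshift]
  rw [Set.indicator_apply, Set.indicator_apply, Set.mem_smul_set_iff_inv_smul_mem]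
  rfl

lemma one_le_setMean_add_setMean {S T : Set X} {g : G} (h : S ∪ g • T = Set.univ) :
    1 ≤ M.setMean S + M.setMean T := by
  rw [← M.setMean_univ, ← h, ← M.setMean_smul g T, setMean, setMean, setMean, ← map_add]
  refine M.mono fun x => ?_
  simp only [Submodule.coe_add, Pi.add_apply, BddFns.coe_indicator]
  rw [← Set.indicator_union_add_inter_apply]
  exact le_add_of_nonneg_right (Set.indicator_nonneg (fun _ _ => zero_le_one) x)

lemma sum_setMean_le_one {ι : Type*} {s : Finset ι} {S : ι → Set X}
    (hS : (s : Set ι).PairwiseDisjoint S) : ∑ i ∈ s, M.setMean (S i) ≤ 1 := by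
  rw [← M.setMean_univ]
  simp only [setMean, ← map_sum]
  refine M.mono fun x => ?_
  simp only [Submodule.coe_sum, Finset.sum_apply, BddFns.coe_indicator,
    ← Finset.indicator_biUnion_apply s S hS]
  exact Set.indicator_le_indicator_of_subset (f := (1 : X → ℝ)) (Set.subset_univ _)
    (fun _ => zero_le_one) x

end SetMean

variable {Γ Δ X Y : Type*} [Group Γ] [Group Δ] [MulAction Γ X] [MulAction Δ Y]

def map (M : InvariantMean Γ X) (φ : Γ →* Δ) (hφ : Function.Surjective φ) (θ : X → Y)
    (hθ : ∀ g x, θ (g • x) = φ g • θ x) : InvariantMean Δ Y where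
  toFun := M.toFun ∘ₗ BddFns.comap θ
  norm_one := M.norm_one
  nonneg f hf := M.nonneg _ fun x => hf (θ x)
  invariant d f := by
    obtain ⟨g, rfl⟩ := hφ d
    rw [LinearMap.comp_apply, LinearMap.comp_apply, ← M.invariant g (BddFns.comap θ f)]
    refine congrArg M.toFun (Subtype.ext (funext fun x => ?_))
    simp [lshift, hθ, map_inv]

end InvariantMean

theorem FreeGroup.not_amenableGroup {α : Type*} [Nontrivial α] :
    ¬ AmenableGroup (FreeGroup α) := by
  classical
  rintro ⟨M⟩
  obtain ⟨a, b, hab⟩ := exists_pair_ne α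
  have hpair (x : α) : 1 ≤ ∑ c : Bool, M.setMean (startsWith (x, c)) := by
    rw [Fintype.sum_bool, add_comm]
    refine M.one_le_setMean_add_setMean (g := (mk [(x, true)])⁻¹)
      (Set.eq_univ_of_forall fun w => ?_)
    by_cases hw : w ∈ startsWith (x, false)
    · exact Or.inl hw
    · exact Or.inr (Set.mem_inv_smul_set_iff.2 (startsWith_mk_mul w hw))
  have hdisj : ((({a, b} : Finset α) ×ˢ Finset.univ : Finset (α × Bool)) :
      Set (α × Bool)).PairwiseDisjoint startsWith :=
    fun _ _ _ _ h => startsWith.disjoint_iff_ne.2 h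
  have hle := M.sum_setMean_le_one hdisj
  rw [Finset.sum_product] at hle
  have hge := Finset.sum_le_sum fun x (_ : x ∈ ({a, b} : Finset α)) => hpair x
  rw [Finset.sum_const, Finset.card_pair hab, nsmul_eq_mul, Nat.cast_ofNat, mul_one] at hge
  linarith

theorem Subgroup.Coamenable.amenableGroup_of_le_ker {G Q : Type*} [Group G] [Group Q]
    {K : Subgroup G} (hK : K.Coamenable) (φ : G →* Q) (hφ : Function.Surjective φ)
    (hKφ : K ≤ φ.ker) : AmenableGroup Q := by
  obtain ⟨M⟩ := hK
  let θ : G ⧸ K → Q := Quotient.lift φ fun a b hab => by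
    have := hKφ (QuotientGroup.leftRel_apply.mp hab)
    rwa [MonoidHom.mem_ker, map_mul, map_inv, inv_mul_eq_one] at this
  refine ⟨M.map φ hφ θ fun g x => ?_⟩
  induction x using QuotientGroup.induction_on with | H x => exact map_mul φ g x

section Cesaro

open Finset

def cesaro (u : ℕ → ℝ) (n : ℕ) : ℝ := (n : ℝ)⁻¹ * ∑ i ∈ range n, u i

lemma cesaro_sub (u v : ℕ → ℝ) (n : ℕ) : cesaro (u - v) n = cesaro u n - cesaro v n := by
  simp only [cesaro, Pi.sub_apply, sum_sub_distrib, mul_sub]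

lemma cesaro_mem_bddFns {u : ℕ → ℝ} (hu : u ∈ BddFns ℕ) : cesaro u ∈ BddFns ℕ := by
  obtain ⟨C, hC⟩ := hu
  refine ⟨C, fun n => ?_⟩
  rcases n.eq_zero_or_pos with rfl | hn
  · simpa [cesaro] using (abs_nonneg _).trans (hC 0)
  · rw [cesaro, abs_mul, abs_inv, Nat.abs_cast, inv_mul_le_iff₀ (by positivity)]
    calc |∑ i ∈ range n, u i| ≤ ∑ i ∈ range n, |u i| := abs_sum_le_sum_abs _ _
      _ ≤ ∑ _i ∈ range n, C := sum_le_sum fun i _ => hC i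
      _ = n * C := by simp

lemma tendsto_cesaro_sub_of_eventuallyEq {u v : ℕ → ℝ} (h : u =ᶠ[atTop] v) :
    Tendsto (fun n => cesaro u n - cesaro v n) atTop (𝓝 0) := by
  simp only [← cesaro_sub]
  refine Tendsto.cesaro (tendsto_const_nhds.congr' ?_)
  filter_upwards [h] with n hn using by simp [hn]

lemma tendsto_cesaro_comp_succ_sub {u : ℕ → ℝ} (hu : u ∈ BddFns ℕ) :
    Tendsto (fun n => cesaro (fun i => u (i + 1)) n - cesaro u n) atTop (𝓝 0) := by
  obtain ⟨C, hC⟩ := hu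
  have htelescope (n : ℕ) :
      cesaro (fun i => u (i + 1)) n - cesaro u n = (u n - u 0) * (n : ℝ)⁻¹ := by
    rw [← cesaro_sub, cesaro, Pi.sub_def, sum_range_sub, mul_comm]
  simp only [htelescope]
  refine bdd_le_mul_tendsto_zero' (C + C) (Eventually.of_forall fun n => ?_)
    tendsto_inv_atTop_nhds_zero_nat
  exact (abs_sub _ _).trans (add_le_add (hC n) (hC 0))

lemma tendsto_cesaro_comp_add_sub {u : ℕ → ℝ} (hu : u ∈ BddFns ℕ) (p : ℕ) :
    Tendsto (fun n => cesaro (fun i => u (i + p)) n - cesaro u n) atTop (𝓝 0) := by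
  induction p with
  | zero => simp
  | succ p ih =>
    have hup : (fun i => u (i + p)) ∈ BddFns ℕ := hu.imp fun _ hC i => hC (i + p)
    simpa [add_assoc, add_comm 1 p] using (tendsto_cesaro_comp_succ_sub hup).add ih

lemma tendsto_cesaro_sub_of_eventually_shift {u v : ℕ → ℝ} (hu : u ∈ BddFns ℕ)
    (hv : v ∈ BddFns ℕ) {p q : ℕ} (h : ∀ᶠ i in atTop, u (i + p) = v (i + q)) :
    Tendsto (fun n => cesaro u n - cesaro v n) atTop (𝓝 0) := by
  have := ((tendsto_cesaro_sub_of_eventuallyEq h).sub (tendsto_cesaro_comp_add_sub hu p)).add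
    (tendsto_cesaro_comp_add_sub hv q)
  rw [sub_zero, add_zero] at this
  exact this.congr fun n => by ring

lemma exists_tendsto_of_mem_bddFns {ι : Type*} {u : ι → ℝ} (hu : u ∈ BddFns ι)
    (U : Ultrafilter ι) : ∃ L, Tendsto u U (𝓝 L) := by
  obtain ⟨C, hC⟩ := hu
  obtain ⟨L, -, hL⟩ := isCompact_Icc.ultrafilter_le_nhds (U.map u)
    (le_principal_iff.2 (mem_map.2 (univ_mem' fun i => abs_le.1 (hC i))))
  exact ⟨L, hL⟩

lemma tendsto_limUnder_cesaro {u : ℕ → ℝ} (hu : u ∈ BddFns ℕ) :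
    Tendsto (cesaro u) (Ultrafilter.of atTop : Ultrafilter ℕ)
      (𝓝 (limUnder (Ultrafilter.of atTop : Ultrafilter ℕ) (cesaro u))) :=
  tendsto_nhds_limUnder (exists_tendsto_of_mem_bddFns (cesaro_mem_bddFns hu) _)

def cesaroLimit : BddFns ℕ →ₗ[ℝ] ℝ where
  toFun u := limUnder (Ultrafilter.of atTop : Ultrafilter ℕ) (cesaro u)
  map_add' u v := by
    rw [← ((tendsto_limUnder_cesaro u.2).add (tendsto_limUnder_cesaro v.2)).limUnder_eq]
    congr 1 with n
    simp [cesaro, sum_add_distrib, mul_add]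
  map_smul' c u := by
    rw [RingHom.id_apply, smul_eq_mul, ← ((tendsto_limUnder_cesaro u.2).const_mul c).limUnder_eq]
    congr 1 with n
    simp [cesaro, ← mul_sum, mul_left_comm]

lemma tendsto_cesaroLimit (u : BddFns ℕ) :
    Tendsto (cesaro u) (Ultrafilter.of atTop : Ultrafilter ℕ) (𝓝 (cesaroLimit u)) :=
  tendsto_limUnder_cesaro u.2

lemma cesaroLimit_eq_of_tendsto_sub {u v : BddFns ℕ}
    (h : Tendsto (fun n => cesaro u n - cesaro v n) atTop (𝓝 0)) :
    cesaroLimit u = cesaroLimit v := by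
  have := (h.mono_left (Ultrafilter.of_le _)).add (tendsto_cesaroLimit v)
  rw [zero_add] at this
  exact tendsto_nhds_unique (tendsto_cesaroLimit u) (this.congr fun n => by ring)

def InvariantMean.ofShiftingSequence {Γ X : Type*} [Group Γ] [MulAction Γ X] (x : ℕ → X)
    (hx : ∀ g : Γ, ∃ p q : ℕ, ∀ᶠ i in atTop, g • x (i + p) = x (i + q)) :
    InvariantMean Γ X where
  toFun := cesaroLimit ∘ₗ BddFns.comap x
  norm_one :=
    tendsto_nhds_unique (tendsto_cesaroLimit _)
      ((tendsto_const_nhds.cesaro).mono_left (Ultrafilter.of_le _))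
  nonneg f hf := ge_of_tendsto' (tendsto_cesaroLimit _) fun n =>
    mul_nonneg (inv_nonneg.2 n.cast_nonneg) (sum_nonneg fun i _ => hf (x i))
  invariant g f := by
    obtain ⟨p, q, h⟩ := hx g⁻¹
    refine cesaroLimit_eq_of_tendsto_sub (tendsto_cesaro_sub_of_eventually_shift
      (BddFns.comap x _).2 (BddFns.comap x f).2 (p := p) (q := q) ?_)
    filter_upwards [h] with i hi
    simp [lshift, hi]

end Cesaro

section Wreath

variable (F : Type*) [Group F]

def finiteMulSupport : Subgroup (ℤ → F) where
  carrier := {f | (Function.mulSupport f).Finite}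
  one_mem' := by simp
  mul_mem' ha hb := (ha.union hb).subset (Function.mulSupport_mul _ _)
  inv_mem' ha := by simpa [Function.mulSupport_inv] using ha

variable {F} in
lemma comp_sub_mem_finiteMulSupport {f : ℤ → F} (hf : f ∈ finiteMulSupport F) (m : ℤ) :
    (fun i => f (i - m)) ∈ finiteMulSupport F :=
  hf.preimage sub_left_injective.injOn

def shift (m : ℤ) : finiteMulSupport F ≃* finiteMulSupport F where
  toFun f := ⟨fun i => f.1 (i - m), comp_sub_mem_finiteMulSupport f.2 m⟩
  invFun f := ⟨fun i => f.1 (i + m), by simpa using comp_sub_mem_finiteMulSupport f.2 (-m)⟩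
  left_inv f := by ext; simp
  right_inv f := by ext; simp
  map_mul' _ _ := rfl

def shiftHom : Multiplicative ℤ →* MulAut (finiteMulSupport F) where
  toFun m := shift F m.toAdd
  map_one' := by ext; simp [shift]
  map_mul' a b := by ext; simp [shift, sub_sub]

@[simp] lemma shiftHom_apply (m : Multiplicative ℤ) (f : finiteMulSupport F) (i : ℤ) :
    (shiftHom F m f : ℤ → F) i = f.1 (i - m.toAdd) := rfl

/-- The restricted wreath product `F ≀ ℤ`. -/
abbrev IntWreath := finiteMulSupport F ⋊[shiftHom F] Multiplicative ℤ

namespace IntWreath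

open SemidirectProduct

def base : Subgroup (IntWreath F) := (rightHom : IntWreath F →* Multiplicative ℤ).ker

def positiveBase : Subgroup (IntWreath F) where
  carrier := {g | g.right = 1 ∧ ∀ i ≤ 0, g.left.1 i = 1}
  one_mem' := ⟨rfl, fun _ _ => rfl⟩
  mul_mem' := by
    rintro a b ⟨ha, ha'⟩ ⟨hb, hb'⟩
    exact ⟨by simp [ha, hb], fun i hi => by simp [ha, ha' i hi, hb' i hi]⟩
  inv_mem' := by
    rintro a ⟨ha, ha'⟩
    exact ⟨by simp [ha], fun i hi => by simp [ha, ha' i hi]⟩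

def evalZero : base F →* F where
  toFun h := (h : IntWreath F).left.1 0
  map_one' := rfl
  map_mul' h h' := by simp [show (h : IntWreath F).right = 1 from h.2]

variable {F}

lemma positiveBase_le_base : positiveBase F ≤ base F := fun _ hg => hg.1

lemma positiveBase_subgroupOf_normal : ((positiveBase F).subgroupOf (base F)).Normal := by
  refine ⟨fun k hk h => ?_⟩
  obtain ⟨hk₁, hk₂⟩ := Subgroup.mem_subgroupOf.1 hk
  have hh : (h : IntWreath F).right = 1 := h.2
  exact ⟨by simp [hh, hk₁], fun i hi => by simp [hh, hk₁, hk₂ i hi]⟩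

lemma evalZero_surjective : Function.Surjective (evalZero F) := fun a =>
  ⟨⟨inl ⟨Pi.mulSingle 0 a, (Set.finite_singleton 0).subset Pi.mulSupport_mulSingle_subset⟩,
    rightHom_inl _⟩, by simp [evalZero]⟩

lemma positiveBase_subgroupOf_le_ker_evalZero :
    (positiveBase F).subgroupOf (base F) ≤ (evalZero F).ker := fun _ hk => hk.2 0 le_rfl

lemma eventually_inr_mul_mul_inr_mem_positiveBase (g : IntWreath F) :
    ∀ᶠ n : ℤ in atTop,
      inr (.ofAdd n) * g * inr (.ofAdd (-(n + g.right.toAdd))) ∈ positiveBase F := by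
  obtain ⟨c, hc⟩ := g.left.2.bddBelow
  filter_upwards [eventually_gt_atTop (-c)] with n hn
  refine ⟨by simp, fun i hi => ?_⟩
  simp only [mul_left, left_inr, right_inr, one_mul, map_one, mul_one, shiftHom_apply, toAdd_ofAdd]
  by_contra h
  have := hc h
  omega

lemma coamenable_positiveBase : (positiveBase F).Coamenable := by
  refine ⟨InvariantMean.ofShiftingSequence
    (fun i : ℕ => ((inr (.ofAdd (-(i : ℤ))) : IntWreath F) : IntWreath F ⧸ positiveBase F))
    fun g => ⟨(-g⁻¹.right.toAdd).toNat, g⁻¹.right.toAdd.toNat, ?_⟩⟩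
  filter_upwards [(tendsto_natCast_atTop_atTop.comp
    (tendsto_add_atTop_nat (-g⁻¹.right.toAdd).toNat)).eventually
    (eventually_inr_mul_mul_inr_mem_positiveBase g⁻¹)] with i hi
  -- `g • t^-(i+p) K = t^-(i+q) K` means `t^(i+p) * g⁻¹ * t^-(i+q) ∈ K`, where `q - p` is the
  -- `ℤ`-component of `g⁻¹`.
  rw [MulAction.Quotient.smul_mk, smul_eq_mul, QuotientGroup.eq, mul_inv_rev, ← map_inv,
    ← ofAdd_neg, neg_neg]
  convert hi using 4
  · rfl
  · simp only [Function.comp_apply]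
    omega

end IntWreath

end Wreath

end

/-- There are triples `K ⊴ H ⊴ G` with `K` co-amenable in `G` but not in `H`. -/
theorem exists_coamenable_not_hereditary :
    ∃ (G : GrpCat) (H K : Subgroup G), H.Normal ∧ K ≤ H ∧ (K.subgroupOf H).Normal ∧
      K.Coamenable ∧ ¬ (K.subgroupOf H).Coamenable :=
  ⟨GrpCat.of (IntWreath (FreeGroup (ULift Bool))), IntWreath.base _, IntWreath.positiveBase _,
    MonoidHom.normal_ker _, IntWreath.positiveBase_le_base,
    IntWreath.positiveBase_subgroupOf_normal, IntWreath.coamenable_positiveBase,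
    fun h => FreeGroup.not_amenableGroup (h.amenableGroup_of_le_ker _
      IntWreath.evalZero_surjective IntWreath.positiveBase_subgroupOf_le_ker_evalZero)⟩
end

section
/- Let G be a group, K a subgroup of G, and (H_k)_{k∈ℕ} an increasing sequence of subgroups of G whose union is a subgroup H. If for every k there exists a point of the coset space G/K fixed by every element of H_k (equivalently, there exists g_k ∈ G with H_k ≤ g_k K g_k⁻¹), then there exists an H-invariant mean on ℓ∞(G/K). -/
/-!
Choose points `xₖ ∈ G/K` fixed by `Hₖ` and an ultrafilter `U` on `ℕ` finer than the cofinite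
filter. Every `h ∈ H` lies in `Hₖ` for all large `k`, so it fixes `xₖ` for `U`-almost all `k`.
Hence the `U`-limit of the point evaluations `f ↦ f xₖ`, which exists since `f` is bounded,
is an `H`-invariant mean.
-/

open Filter Topology

namespace BddFns

variable {ι X : Type*} (U : Ultrafilter ι) (x : ι → X)

lemma exists_tendsto_ultrafilter (f : BddFns X) :
    ∃ L, Tendsto (fun i => (f : X → ℝ) (x i)) U (𝓝 L) := by
  obtain ⟨C, hC⟩ := f.2
  obtain ⟨L, -, hL⟩ := (isCompact_Icc (a := -C) (b := C)).ultrafilter_le_nhds'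
    (U.map fun i => (f : X → ℝ) (x i))
    (Ultrafilter.mem_map.2 (univ_mem' fun i => abs_le.mp (hC (x i))))
  exact ⟨L, hL⟩

lemma tendsto_limUnder_ultrafilter (f : BddFns X) :
    Tendsto (fun i => (f : X → ℝ) (x i)) U
      (𝓝 (limUnder (U : Filter ι) fun i => (f : X → ℝ) (x i))) :=
  tendsto_nhds_limUnder (exists_tendsto_ultrafilter U x f)

noncomputable def ultrafilterLimit : BddFns X →ₗ[ℝ] ℝ where
  toFun f := limUnder (U : Filter ι) fun i => (f : X → ℝ) (x i)
  map_add' f g :=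
    ((tendsto_limUnder_ultrafilter U x f).add (tendsto_limUnder_ultrafilter U x g)).limUnder_eq
  map_smul' c f := ((tendsto_limUnder_ultrafilter U x f).const_mul c).limUnder_eq

end BddFns

open BddFns in
noncomputable def InvariantMean.ofEventuallyFixed {G X ι : Type*} [Group G] [MulAction G X]
    (U : Ultrafilter ι) (x : ι → X) (hfix : ∀ g : G, ∀ᶠ i in U, g • x i = x i) :
    InvariantMean G X where
  toFun := ultrafilterLimit U x
  norm_one := tendsto_const_nhds.limUnder_eq
  nonneg f hf := ge_of_tendsto' (tendsto_limUnder_ultrafilter U x f) fun i => hf (x i)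
  invariant g f := by
    refine ((tendsto_limUnder_ultrafilter U x f).congr' ?_).limUnder_eq
    filter_upwards [hfix g⁻¹] with i hi
    simp only [lshift, hi]

/-- If `H` is the union of an increasing sequence of subgroups `Hₖ`, and for every `k`
some point of `G/K` is fixed by all of `Hₖ`, then there is an `H`-invariant mean
on ℓ∞(G/K). -/
theorem exists_invariant_mean_of_increasing_fixed_points {G : Type*} [Group G]
    (K : Subgroup G) (Hk : ℕ → Subgroup G) (hmono : Monotone Hk)
    (H : Subgroup G) (hH : (H : Set G) = ⋃ k, (Hk k : Set G))
    (hfix : ∀ k, ∃ x : G ⧸ K, ∀ h ∈ Hk k, h • x = x) :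
    Nonempty (InvariantMean H (G ⧸ K)) := by
  choose x hx using hfix
  refine ⟨InvariantMean.ofEventuallyFixed (Ultrafilter.of atTop) x fun h => ?_⟩
  obtain ⟨k₀, hk₀⟩ := Set.mem_iUnion.mp (hH ▸ h.2 : (h : G) ∈ ⋃ k, (Hk k : Set G))
  exact Ultrafilter.of_le _ (eventually_atTop.2 ⟨k₀, fun k hk => hx k h (hmono hk hk₀)⟩)
end
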